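/- Let ξ_{n,i} be defined by ξ_{0,0} = 1, ξ_{0,i} = 0 for i ≠ 0, and ξ_{n+1,i} = (1+2n−6i)·ξ_{n,i} + (n−2i+2)·ξ_{n,i−1} − 4(i+1)·ξ_{n,i+1}, and set ξ_n(x) = Σ_{i=0}^{⌊n/2⌋} ξ_{n,i} x^i. In the ring of formal power series in z with coefficients in ℚ[x], the identity (Σ_{n≥0} ξ_n(x) zⁿ/n!) · (C(z) − S(z)) = 1 holds, where C(z) = Σ_{m≥0} (−1)^m (1+x)^m z^{2m}/(2m)! and S(z) = Σ_{m≥0} (−1)^m (1+x)^m z^{2m+1}/(2m+1)! (the formal expansions of cos(z√(1+x)) and sin(z√(1+x))/√(1+x)). -/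

import Mathlib

open Finset

/-- Signed permutations of order `n` (the hyperoctahedral group), modeled as a
permutation of `Fin n` together with a sign for each position. -/
abbrev BSigned (n : ℕ) := Equiv.Perm (Fin n) × (Fin n → Bool)

/-- The word of a signed permutation: `bword σ j = σ(j)` for `1 ≤ j ≤ n`,
with the convention `σ(0) = 0`. -/
def bword {n : ℕ} (σ : BSigned n) (j : ℕ) : ℤ :=
  if h : 1 ≤ j ∧ j ≤ n then
    (if σ.2 ⟨j - 1, by omega⟩ then -1 else 1) * ((σ.1 ⟨j - 1, by omega⟩ : ℕ) + 1)
  else 0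

/-- The number of alternating descents of a signed permutation: the number of
`0 ≤ j ≤ n-1` such that `j` is even and `σ(j) < σ(j+1)`, or `j` is odd and `σ(j) > σ(j+1)`. -/
def altdesB {n : ℕ} (σ : BSigned n) : ℕ :=
  ((Finset.range n).filter (fun j => (Even j ∧ bword σ j < bword σ (j + 1)) ∨
      (Odd j ∧ bword σ (j + 1) < bword σ j))).card

/-- The type B alternating Eulerian number `B̂(n,k)`. -/
def Bhat (n k : ℕ) : ℕ :=
  (Finset.univ.filter (fun σ : BSigned n => altdesB σ = k)).card

/-- The type B alternating Eulerian polynomial `B̂_n(x)` as a real function. -/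
noncomputable def Bpoly (n : ℕ) (x : ℝ) : ℝ :=
  ∑ σ : BSigned n, x ^ altdesB σ

/-- The word of a permutation of `{1,…,n}`: `aword π j = π(j)` for `1 ≤ j ≤ n`,
with the convention `π(0) = 0`. -/
def aword {n : ℕ} (π : Equiv.Perm (Fin n)) (j : ℕ) : ℕ :=
  if h : 1 ≤ j ∧ j ≤ n then (π ⟨j - 1, by omega⟩ : ℕ) + 1 else 0

/-- The number of alternating descents of a permutation: the number of
`1 ≤ j ≤ n-1` such that `j` is odd and `π(j) > π(j+1)`, or `j` is even and `π(j) < π(j+1)`. -/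
def altdesA {n : ℕ} (π : Equiv.Perm (Fin n)) : ℕ :=
  ((Finset.Icc 1 (n - 1)).filter (fun j => (Odd j ∧ aword π (j + 1) < aword π j) ∨
      (Even j ∧ aword π j < aword π (j + 1)))).card

/-- The type A alternating Eulerian number `Â(n,k)`. -/
def Ahat (n k : ℕ) : ℕ :=
  (Finset.univ.filter (fun π : Equiv.Perm (Fin n) => altdesA π = k)).card

/-- The type A alternating Eulerian polynomial `Â_n(x)` as a real function. -/
noncomputable def Apoly (n : ℕ) (x : ℝ) : ℝ :=
  ∑ π : Equiv.Perm (Fin n), x ^ altdesA π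

/-- The number of left peaks of a permutation: indices `1 ≤ i ≤ n-1` with
`π(i-1) < π(i) > π(i+1)`, where `π(0) = 0`. -/
def lpk {n : ℕ} (π : Equiv.Perm (Fin n)) : ℕ :=
  ((Finset.Icc 1 (n - 1)).filter (fun i =>
      aword π (i - 1) < aword π i ∧ aword π (i + 1) < aword π i)).card

/-- `M n k` is the number of permutations of `{1,…,n}` with exactly `k` left peaks. -/
def M (n k : ℕ) : ℕ :=
  (Finset.univ.filter (fun π : Equiv.Perm (Fin n) => lpk π = k)).card

/-- The derivative polynomials for secant: `Q 0 = 1`,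
`Q (n+1) = x Q n + (1+x²) (Q n)'`. -/
noncomputable def Q : ℕ → Polynomial ℝ
  | 0 => 1
  | n + 1 => Polynomial.X * Q n + (1 + Polynomial.X ^ 2) * Polynomial.derivative (Q n)

/-- The coefficients `ξ_{n,i}` (terms with negative index vanish). -/
def xi : ℕ → ℤ → ℤ
  | 0, i => if i = 0 then 1 else 0
  | n + 1, i => (1 + 2 * (n : ℤ) - 6 * i) * xi n i + ((n : ℤ) - 2 * i + 2) * xi n (i - 1)
      - 4 * (i + 1) * xi n (i + 1)

/-- The polynomial `ξ_n(x) = Σ_{i=0}^{⌊n/2⌋} ξ_{n,i} x^i` as a real function. -/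
noncomputable def xiPoly (n : ℕ) (x : ℝ) : ℝ :=
  ∑ i ∈ Finset.range (n / 2 + 1), (xi n i : ℝ) * x ^ i

/-- A snake: a signed permutation with `σ(0) < σ(1) > σ(2) < σ(3) > ⋯`. -/
def IsSnake {n : ℕ} (σ : BSigned n) : Prop :=
  ∀ i : ℕ, (2 * i + 1 ≤ n → bword σ (2 * i) < bword σ (2 * i + 1)) ∧
    (2 * i + 2 ≤ n → bword σ (2 * i + 2) < bword σ (2 * i + 1))

/-- The Springer number `s_n`: the number of snakes of order `n`. -/
noncomputable def springer (n : ℕ) : ℕ := Nat.card {σ : BSigned n // IsSnake σ}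

/-- An alternating (down-up) permutation: `π(1) > π(2) < π(3) > ⋯`. -/
def IsAlternating {m : ℕ} (π : Equiv.Perm (Fin m)) : Prop :=
  ∀ j : ℕ, 1 ≤ j → j + 1 ≤ m →
    (Odd j → aword π (j + 1) < aword π j) ∧ (Even j → aword π j < aword π (j + 1))

/-- The secant number `E_{2n}`: the number of alternating permutations of `{1,…,2n}`. -/
noncomputable def secantNumber (n : ℕ) : ℕ :=
  Nat.card {π : Equiv.Perm (Fin (2 * n)) // IsAlternating π}

/-- The polynomial `ξ_n(x)` over `ℚ`. -/
noncomputable def xiPolyQ (n : ℕ) : Polynomial ℚ :=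
  ∑ i ∈ Finset.range (n / 2 + 1), Polynomial.C ((xi n i : ℚ)) * Polynomial.X ^ i

/-- The formal expansion of `cos(z√(1+x))` as a power series in `z` over `ℚ[x]`:
`Σ_{m≥0} (−1)^m (1+x)^m z^{2m}/(2m)!`. -/
noncomputable def cosSqrtSeries : PowerSeries (Polynomial ℚ) :=
  PowerSeries.mk fun j =>
    if Even j then
      Polynomial.C ((-1) ^ (j / 2) * ((j.factorial : ℚ)⁻¹)) * (1 + Polynomial.X) ^ (j / 2)
    else 0

/-- The formal expansion of `sin(z√(1+x))/√(1+x)` as a power series in `z` over `ℚ[x]`: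
`Σ_{m≥0} (−1)^m (1+x)^m z^{2m+1}/(2m+1)!`. -/
noncomputable def sinSqrtSeries : PowerSeries (Polynomial ℚ) :=
  PowerSeries.mk fun j =>
    if ¬ Even j then
      Polynomial.C ((-1) ^ ((j - 1) / 2) * ((j.factorial : ℚ)⁻¹)) *
        (1 + Polynomial.X) ^ ((j - 1) / 2)
    else 0

/-!
Let `L = ∂_z - (x + 2) z ∂_z + 2 (x + 1) (x + 2) ∂_x`, a derivation of `ℚ[x]⟦z⟧`. On an
exponential generating function `Σ p_n zⁿ / n!` it acts as `p_n ↦ p_{n+1} - (x + 2) n p_n +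
2 (x + 1) (x + 2) p_n'`, so the recurrence defining `ξ_{n,i}` says exactly `L F = F` for
`F = Σ ξ_n zⁿ / n!`, while a parity computation gives `L G = -G` for `G = C - S`. By the Leibniz
rule `L (F G) = 0`. Comparing coefficients of `zⁿ`, in characteristic zero a series killed by `L`
equals its constant term once `∂_x` kills that term, and the constant term of `F G` is `1`.
-/

namespace PowerSeries

section FirstOrder

variable {R A : Type*} [CommRing R] [CommRing A] [Algebra R A]

noncomputable def mapDerivation (D : Derivation R A A) : Derivation R A⟦X⟧ A⟦X⟧ :=
  Derivation.mk'
    { toFun := fun f => mk fun n => D (coeff n f)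
      map_add' := fun f g => by ext n; simp
      map_smul' := fun r f => by ext n; simp }
    (fun f g => by
      ext n
      rw [smul_eq_mul, smul_eq_mul, mul_comm g]
      simp only [LinearMap.coe_mk, AddHom.coe_mk, coeff_mk, map_add, coeff_mul,
        map_sum, Derivation.leibniz, Finset.sum_add_distrib, smul_eq_mul]
      congr 1
      exact Finset.sum_congr rfl fun p _ => mul_comm _ _)

theorem coeff_mapDerivation (D : Derivation R A A) (f : A⟦X⟧) (n : ℕ) :
    coeff n (mapDerivation D f) = D (coeff n f) := by
  simp [mapDerivation]

noncomputable def firstOrderDerivation (D : Derivation R A A) (u v : A) :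
    Derivation R A⟦X⟧ A⟦X⟧ :=
  (d⁄dX A).restrictScalars R - (C u * X) • (d⁄dX A).restrictScalars R + C v • mapDerivation D

theorem coeff_X_mul_derivative (f : A⟦X⟧) (n : ℕ) :
    coeff n (X * d⁄dX A f) = n * coeff n f := by
  cases n with
  | zero => simp
  | succ n => rw [coeff_succ_X_mul, coeff_derivative, mul_comm]; push_cast; rfl

theorem coeff_firstOrderDerivation (D : Derivation R A A) (u v : A) (f : A⟦X⟧) (n : ℕ) :
    coeff n (firstOrderDerivation D u v f) =
      (n + 1) * coeff (n + 1) f - u * (n * coeff n f) + v * D (coeff n f) := by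
  simp only [firstOrderDerivation, Derivation.add_apply, Derivation.sub_apply,
    Derivation.smul_apply, Derivation.restrictScalars_apply, smul_eq_mul, map_add, map_sub,
    mul_assoc, coeff_C_mul, coeff_X_mul_derivative, coeff_derivative,
    coeff_mapDerivation]
  ring

theorem eq_C_of_firstOrderDerivation_eq_zero [IsAddTorsionFree A] {D : Derivation R A A}
    {u v : A} {f : A⟦X⟧} (hf : firstOrderDerivation D u v f = 0)
    (h₀ : D (constantCoeff f) = 0) : f = C (constantCoeff f) := by
  have step (n : ℕ) (hn : n * coeff n f = 0) (hD : D (coeff n f) = 0) :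
      coeff (n + 1) f = 0 := by
    have h := congrArg (coeff n) hf
    rw [coeff_firstOrderDerivation, hn, hD, map_zero, mul_zero, mul_zero, sub_zero, add_zero,
      ← Nat.cast_add_one, ← nsmul_eq_mul] at h
    exact (smul_eq_zero.mp h).resolve_left n.succ_ne_zero
  have hsucc (n : ℕ) : coeff (n + 1) f = 0 := by
    induction n with
    | zero => exact step 0 (by simp) (by simpa using h₀)
    | succ n ih => exact step (n + 1) (by simp [ih]) (by simp [ih])
  ext (_ | n)
  · simp
  · simp [hsucc]

end FirstOrder

section Exponential

variable {A : Type*} [CommRing A] [Algebra ℚ A]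

noncomputable def egf (p : ℕ → A) : A⟦X⟧ :=
  mk fun n => (n.factorial : ℚ)⁻¹ • p n

theorem firstOrderDerivation_egf (D : Derivation ℚ A A) (u v : A) (p : ℕ → A) :
    firstOrderDerivation D u v (egf p) =
      egf fun n => p (n + 1) - u * (n * p n) + v * D (p n) := by
  have hfact (n : ℕ) : ((n : ℚ) + 1) * ((n + 1).factorial : ℚ)⁻¹ = (n.factorial : ℚ)⁻¹ := by
    rw [Nat.factorial_succ]; push_cast; field_simp
  ext n
  simp only [coeff_firstOrderDerivation, egf, coeff_mk, D.map_smul]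
  simp only [Algebra.smul_def]
  rw [← hfact n, map_mul]
  simp only [map_add, map_natCast, map_one]
  ring

theorem egf_neg (p : ℕ → A) : egf (-p) = -egf p := by
  ext1 n
  simp [egf]

end Exponential

end PowerSeries

open Polynomial

theorem xi_eq_zero_of_neg (n : ℕ) {i : ℤ} (hi : i < 0) : xi n i = 0 := by
  induction n generalizing i with
  | zero => simp [xi]; omega
  | succ n ih =>
    rw [xi, ih hi, ih (by omega : i - 1 < 0)]
    rcases (by omega : i + 1 < 0 ∨ i + 1 = 0) with h | h
    · rw [ih h]; ring
    · rw [h]; ring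

theorem xi_eq_zero_of_lt (n : ℕ) {i : ℤ} (hi : (n : ℤ) < 2 * i) : xi n i = 0 := by
  induction n generalizing i with
  | zero => simp [xi]; omega
  | succ n ih =>
    push_cast at hi
    rw [xi, ih (by omega : (n : ℤ) < 2 * i), ih (by omega : (n : ℤ) < 2 * (i + 1))]
    rcases (by omega : (n : ℤ) < 2 * (i - 1) ∨ (n : ℤ) - 2 * i + 2 = 0) with h | h
    · rw [ih h]; ring
    · rw [h]; ring

theorem coeff_xiPolyQ (n i : ℕ) : (xiPolyQ n).coeff i = xi n i := by
  simp only [xiPolyQ, finsetSum_coeff, coeff_C_mul, coeff_X_pow, mul_ite, mul_one, mul_zero,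
    Finset.sum_ite_eq, Finset.mem_range, ite_eq_left_iff, not_lt]
  intro hi
  rw [xi_eq_zero_of_lt n (by omega), Int.cast_zero]

theorem xiPolyQ_succ (n : ℕ) :
    xiPolyQ (n + 1) = (1 + (X + 2) * (n : ℚ[X])) * xiPolyQ n
      - 2 * (X + 1) * (X + 2) * derivative (xiPolyQ n) := by
  have hrhs : (1 + (X + 2) * (n : ℚ[X])) * xiPolyQ n
      - 2 * (X + 1) * (X + 2) * derivative (xiPolyQ n) =
      C (1 + 2 * n : ℚ) * xiPolyQ n + C (n : ℚ) * (X ^ 1 * xiPolyQ n)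
        - C 4 * derivative (xiPolyQ n) - C 6 * (X ^ 1 * derivative (xiPolyQ n))
        - C 2 * (X ^ 2 * derivative (xiPolyQ n)) := by
    simp only [map_add, map_mul, map_natCast, map_one, map_ofNat]
    ring
  rw [hrhs]
  ext i
  simp only [coeff_add, coeff_sub, coeff_C_mul, coeff_X_pow_mul', coeff_derivative,
    coeff_xiPolyQ]
  rcases i with _ | _ | i <;> simp [xi, xi_eq_zero_of_neg] <;> ring

noncomputable def xiDerivation : Derivation ℚ (PowerSeries ℚ[X]) (PowerSeries ℚ[X]) :=
  PowerSeries.firstOrderDerivation derivative' (X + 2) (2 * (X + 1) * (X + 2))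

theorem xiDerivation_egf_xiPolyQ :
    xiDerivation (PowerSeries.egf xiPolyQ) = PowerSeries.egf xiPolyQ := by
  rw [xiDerivation, PowerSeries.firstOrderDerivation_egf]
  congr 1
  funext n
  rw [xiPolyQ_succ, derivative'_apply]
  ring

noncomputable def cosSubSinCoeff (n : ℕ) : ℚ[X] :=
  C ((-1) ^ ((n + 1) / 2)) * (1 + X) ^ (n / 2)

theorem cosSqrtSeries_sub_sinSqrtSeries :
    cosSqrtSeries - sinSqrtSeries = PowerSeries.egf cosSubSinCoeff := by
  refine PowerSeries.ext fun n => ?_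
  obtain ⟨m, rfl | rfl⟩ := Nat.even_or_odd' n
  · simp [cosSqrtSeries, sinSqrtSeries, PowerSeries.egf, cosSubSinCoeff, smul_eq_C_mul,
      show (2 * m + 1) / 2 = m by omega, show ¬ Odd (2 * m) by simp]
    ring
  · simp [cosSqrtSeries, sinSqrtSeries, PowerSeries.egf, cosSubSinCoeff, smul_eq_C_mul,
      show (2 * m + 1) / 2 = m by omega, show (2 * m + 1 + 1) / 2 = m + 1 by omega]
    ring

theorem one_add_X_mul_derivative_one_add_X_pow {R : Type*} [CommSemiring R] (m : ℕ) :
    (1 + X) * derivative ((1 + X : R[X]) ^ m) = (m : R[X]) * (1 + X) ^ m := by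
  cases m with
  | zero => simp
  | succ m =>
    rw [derivative_pow]
    simp only [derivative_add, derivative_one, derivative_X, zero_add, mul_one, map_natCast,
      Nat.add_sub_cancel]
    ring

theorem one_add_X_mul_derivative_cosSubSinCoeff (n : ℕ) :
    (1 + X) * derivative (cosSubSinCoeff n) = ((n / 2 : ℕ) : ℚ[X]) * cosSubSinCoeff n := by
  rw [cosSubSinCoeff, derivative_C_mul, mul_left_comm, one_add_X_mul_derivative_one_add_X_pow]
  ring

theorem xiDerivation_egf_cosSubSinCoeff :
    xiDerivation (PowerSeries.egf cosSubSinCoeff) = -PowerSeries.egf cosSubSinCoeff := by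
  rw [xiDerivation, PowerSeries.firstOrderDerivation_egf, ← PowerSeries.egf_neg]
  congr 1
  funext n
  have h := one_add_X_mul_derivative_cosSubSinCoeff n
  rw [derivative'_apply, Pi.neg_apply]
  obtain ⟨m, rfl | rfl⟩ := Nat.even_or_odd' n
  · simp only [cosSubSinCoeff, show (2 * m + 1) / 2 = m by omega,
      show (2 * m + 1 + 1) / 2 = m + 1 by omega, show 2 * m / 2 = m by omega] at h ⊢
    rw [pow_succ, mul_neg_one, map_neg]
    push_cast
    linear_combination 2 * (X + 2) * h
  · simp only [cosSubSinCoeff, show (2 * m + 1) / 2 = m by omega,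
      show (2 * m + 1 + 1) / 2 = m + 1 by omega,
      show (2 * m + 1 + 1 + 1) / 2 = m + 1 by omega] at h ⊢
    push_cast
    linear_combination 2 * (X + 2) * h

/-- the exponential generating function identity
`(Σ_{n≥0} ξ_n(x) zⁿ/n!) · (C(z) − S(z)) = 1` in formal power series in `z` over `ℚ[x]`. -/
theorem stmt15 :
    (PowerSeries.mk fun n => Polynomial.C ((n.factorial : ℚ)⁻¹) * xiPolyQ n) *
      (cosSqrtSeries - sinSqrtSeries) = 1 := by
  have hF : (PowerSeries.mk fun n => C ((n.factorial : ℚ)⁻¹) * xiPolyQ n) =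
      PowerSeries.egf xiPolyQ := by
    simp only [PowerSeries.egf, smul_eq_C_mul]
  rw [hF, cosSqrtSeries_sub_sinSqrtSeries]
  have hL : xiDerivation (PowerSeries.egf xiPolyQ * PowerSeries.egf cosSubSinCoeff) = 0 := by
    rw [Derivation.leibniz, xiDerivation_egf_xiPolyQ, xiDerivation_egf_cosSubSinCoeff,
      smul_eq_mul, smul_eq_mul]
    ring
  have h₀ : PowerSeries.constantCoeff
      (PowerSeries.egf xiPolyQ * PowerSeries.egf cosSubSinCoeff) = 1 := by
    simp [PowerSeries.egf, cosSubSinCoeff, xiPolyQ, xi]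
  have hD₀ : derivative' (PowerSeries.constantCoeff
      (PowerSeries.egf xiPolyQ * PowerSeries.egf cosSubSinCoeff)) = 0 := by
    rw [h₀, derivative'_apply, derivative_one]
  rw [PowerSeries.eq_C_of_firstOrderDerivation_eq_zero hL hD₀, h₀, map_one]
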